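/- arXiv:math-ph/0505039 — 3 statements merged into one kernel-verified Lean document; each statement's English description precedes it below -/
import Mathlib

section
/- Let Z ∈ ℂ⁴ be such that Z and its componentwise complex conjugate conj(Z) are linearly independent over ℂ. Then there exists a unique 2-dimensional real subspace V ⊆ ℝ⁴ such that Z lies in the complexification of V, i.e. Z belongs to the ℂ-linear span in ℂ⁴ of the image of V under the componentwise inclusion ℝ⁴ ↪ ℂ⁴. -/
open Submodule

private lemma parts_mem (W : Submodule ℝ (Fin 4 → ℝ)) (z : Fin 4 → ℂ)
    (hz : z ∈ Submodule.span ℂ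
      ((fun v : Fin 4 → ℝ => fun i => (v i : ℂ)) '' (W : Set (Fin 4 → ℝ)))) :
    (fun i => (z i).re) ∈ W ∧ (fun i => (z i).im) ∈ W := by
  induction hz using Submodule.span_induction with
  | mem x hx =>
      obtain ⟨v, hv, rfl⟩ := hx
      exact ⟨by simpa using hv, W.zero_mem⟩
  | zero => exact ⟨W.zero_mem, W.zero_mem⟩
  | add x y _ _ hx hy =>
      constructor
      · have : (fun i => ((x + y) i).re) =
          (fun i => (x i).re) + (fun i => (y i).re) := by
          funext i; simp [Complex.add_re]
        rw [this]; exact W.add_mem hx.1 hy.1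
      · have : (fun i => ((x + y) i).im) =
          (fun i => (x i).im) + (fun i => (y i).im) := by
          funext i; simp [Complex.add_im]
        rw [this]; exact W.add_mem hx.2 hy.2
  | smul a x _ hx =>
      constructor
      · have : (fun i => ((a • x) i).re) =
          a.re • (fun i => (x i).re) - a.im • (fun i => (x i).im) := by
          funext i; simp [Complex.mul_re]
        rw [this]
        exact W.sub_mem (W.smul_mem _ hx.1) (W.smul_mem _ hx.2)
      · have : (fun i => ((a • x) i).im) =
          a.re • (fun i => (x i).im) + a.im • (fun i => (x i).re) := by
          funext i; simp [Complex.mul_im]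
        rw [this]
        exact W.add_mem (W.smul_mem _ hx.2) (W.smul_mem _ hx.1)

/-- A point `Z` of `ℂ⁴` that is linearly independent from its conjugate lies in the
complexification of a unique 2-dimensional real subspace of `ℝ⁴`. -/
theorem stmt_7 (Z : Fin 4 → ℂ)
    (hZ : LinearIndependent ℂ ![Z, fun i => (starRingEnd ℂ) (Z i)]) :
    ∃! V : Submodule ℝ (Fin 4 → ℝ),
      Module.finrank ℝ V = 2 ∧
      Z ∈ Submodule.span ℂ
        ((fun v : Fin 4 → ℝ => fun i => (v i : ℂ)) '' (V : Set (Fin 4 → ℝ))) := by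
  set X : Fin 4 → ℝ := fun i => (Z i).re with hX
  set Y : Fin 4 → ℝ := fun i => (Z i).im with hY
  have hpair := LinearIndependent.pair_iff.mp hZ
  -- linear independence of X, Y over ℝ
  have hXY : LinearIndependent ℝ ![X, Y] := by
    rw [LinearIndependent.pair_iff]
    intro a b hab
    have hab' : ∀ i, a * (Z i).re + b * (Z i).im = 0 := by
      intro i
      have := congrFun hab i
      simpa [X, Y] using this
    have key : ((a - b * Complex.I) / 2) • Z +
        ((a + b * Complex.I) / 2) • (fun i => (starRingEnd ℂ) (Z i)) = 0 := by
      funext i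
      have h := hab' i
      have h1 : Z i = ((Z i).re : ℂ) + (Z i).im * Complex.I := (Complex.re_add_im _).symm
      have h2 : (starRingEnd ℂ) (Z i) = ((Z i).re : ℂ) - (Z i).im * Complex.I := by
        rw [Complex.ext_iff]; simp
      have h' : ((a : ℂ)) * (Z i).re + (b : ℂ) * (Z i).im = 0 := by
        exact_mod_cast congrArg (fun r : ℝ => (r : ℂ)) h
      have hI : (Complex.I : ℂ) ^ 2 = -1 := Complex.I_sq
      simp only [Pi.add_apply, Pi.smul_apply, smul_eq_mul, Pi.zero_apply]
      linear_combination h' - ((b : ℂ) * (Z i).im) * hI +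
        (((a : ℂ) - b * Complex.I) / 2) * h1 + (((a : ℂ) + b * Complex.I) / 2) * h2
    obtain ⟨h1, h2⟩ := hpair _ _ key
    have h1' : (a : ℂ) - b * Complex.I = 0 := by linear_combination 2 * h1
    have hre := congrArg Complex.re h1'
    have him := congrArg Complex.im h1'
    simp at hre him
    exact ⟨hre, him⟩
  set V : Submodule ℝ (Fin 4 → ℝ) := Submodule.span ℝ {X, Y} with hVdef
  have hVrank : Module.finrank ℝ V = 2 := by
    have : Set.range ![X, Y] = {X, Y} := by
      ext v; simp [Fin.exists_fin_two]; tauto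
    rw [hVdef, ← this, finrank_span_eq_card hXY]
    simp
  have hZmem : ∀ (W : Submodule ℝ (Fin 4 → ℝ)), X ∈ W → Y ∈ W →
      Z ∈ Submodule.span ℂ
        ((fun v : Fin 4 → ℝ => fun i => (v i : ℂ)) '' (W : Set (Fin 4 → ℝ))) := by
    intro W hXW hYW
    have hZeq : Z = (fun i => ((X i : ℂ))) + Complex.I • (fun i => ((Y i : ℂ))) := by
      funext i
      simp [X, Y, Complex.ext_iff]
    rw [hZeq]
    apply Submodule.add_mem
    · exact Submodule.subset_span ⟨X, hXW, rfl⟩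
    · exact Submodule.smul_mem _ _ (Submodule.subset_span ⟨Y, hYW, rfl⟩)
  refine ⟨V, ⟨hVrank, hZmem V (Submodule.subset_span (by simp))
      (Submodule.subset_span (by simp))⟩, ?_⟩
  rintro W ⟨hWrank, hWmem⟩
  have hparts := parts_mem W Z hWmem
  have hle : V ≤ W := by
    rw [hVdef, Submodule.span_le]
    rintro v (rfl | rfl)
    · exact hparts.1
    · exact hparts.2
  exact (Submodule.eq_of_le_of_finrank_eq hle (by rw [hVrank, hWrank])).symm
end

section
/- There exists a real symmetric 3×3 matrix S with trace(S) = 0 and trace(S·S) = 3/2 such that the quadric S(x,x) = x·x has no nonzero real points: for every x ∈ ℝ³ with x ≠ 0, xᵀ S x ≠ xᵀ x. -/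
open Matrix

/-- There is a real symmetric trace-free 3×3 matrix `S` with `tr (S²) = 3/2` (the Poncelet
condition) such that the quadric `S(x,x) = x·x` has no nonzero real points. -/
theorem stmt_10 :
    ∃ S : Matrix (Fin 3) (Fin 3) ℝ, S.IsSymm ∧ S.trace = 0 ∧ (S * S).trace = 3 / 2 ∧
      ∀ x : Fin 3 → ℝ, x ≠ 0 → x ⬝ᵥ S.mulVec x ≠ x ⬝ᵥ x := by
  refine ⟨Matrix.diagonal ![1/2, 1/2, -1], Matrix.isSymm_diagonal _, ?_, ?_, ?_⟩
  · simp [Matrix.trace, Matrix.diag, Fin.sum_univ_three]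
    norm_num
  · simp [Matrix.diagonal_mul_diagonal, Matrix.trace, Matrix.diag, Fin.sum_univ_three]
    norm_num
  · intro x hx h
    have hx0 : ¬ (x 0 = 0 ∧ x 1 = 0 ∧ x 2 = 0) := by
      intro ⟨h0, h1, h2⟩
      apply hx
      funext i
      fin_cases i <;> assumption
    have := h
    simp [Matrix.mulVec, dotProduct, Fin.sum_univ_three, Matrix.diagonal] at this
    have hsq : (1/2) * (x 0)^2 + (1/2) * (x 1)^2 + 2 * (x 2)^2 = 0 := by nlinarith [this]
    have h0 : x 0 = 0 := by nlinarith [sq_nonneg (x 0), sq_nonneg (x 1), sq_nonneg (x 2)]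
    have h1 : x 1 = 0 := by nlinarith [sq_nonneg (x 0), sq_nonneg (x 1), sq_nonneg (x 2)]
    have h2 : x 2 = 0 := by nlinarith [sq_nonneg (x 0), sq_nonneg (x 1), sq_nonneg (x 2)]
    exact hx0 ⟨h0, h1, h2⟩
end

section
/- Let φ ∈ ℝ and g ∈ ℂ, and set c = cosh(2φ) (so c ≥ 1 > 0). Then the 2×2 complex matrix J with entries J₀₀ = 2(c² + |g|²)/c, J₀₁ = −g/c, J₁₀ = −conj(g)/c, J₁₁ = 1/(2c) is Hermitian, positive definite, and has determinant equal to 1. -/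
open Matrix
open scoped ComplexOrder

/-!
For `c > 0` the matrix `J` has the Cholesky factorisation `J = Bᴴ * B` with the lower triangular
`B = !![√(2c), 0; -2 ḡ / √(2c), 1 / √(2c)]`, whose determinant is `1`. Hence `J` is Hermitian,
positive definite because `B` is injective, and `det J = |det B|² = 1`.
-/

namespace Matrix

variable {n R : Type*} [Fintype n] [DecidableEq n] [CommRing R] [StarRing R]

theorem det_conjTranspose_mul_self_of_det_eq_one {B : Matrix n n R} (hB : B.det = 1) :
    (Bᴴ * B).det = 1 := by
  rw [det_mul, det_conjTranspose, hB, star_one, one_mul]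

theorem posDef_conjTranspose_mul_self_of_det_eq_one [PartialOrder R] [StarOrderedRing R]
    [NoZeroDivisors R] [Nontrivial R] {B : Matrix n n R} (hB : B.det = 1) : (Bᴴ * B).PosDef :=
  PosDef.conjTranspose_mul_self B (mulVec_injective_of_det_ne_zero (hB ▸ one_ne_zero))

end Matrix

noncomputable def wardFactor (s : ℝ) (g : ℂ) : Matrix (Fin 2) (Fin 2) ℂ :=
  !![s, 0; -2 * starRingEnd ℂ g / s, 1 / s]

theorem det_wardFactor {s : ℝ} (hs : s ≠ 0) (g : ℂ) : (wardFactor s g).det = 1 := by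
  have hs : (s : ℂ) ≠ 0 := by exact_mod_cast hs
  rw [wardFactor, det_fin_two_of]
  field_simp
  ring

theorem conjTranspose_wardFactor_mul_self {s c : ℝ} (hs : s ^ 2 = 2 * c) (hc : 0 < c) (g : ℂ) :
    (wardFactor s g)ᴴ * wardFactor s g =
      !![(2 * ((c : ℂ) ^ 2 + g * (starRingEnd ℂ) g)) / (c : ℂ), -g / (c : ℂ);
         -((starRingEnd ℂ) g) / (c : ℂ), 1 / (2 * (c : ℂ))] := by
  have hc' : (c : ℂ) = s ^ 2 / 2 := by
    rw [eq_div_iff two_ne_zero]; exact_mod_cast (by linarith : c * 2 = s ^ 2)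
  have hs0 : (s : ℂ) ≠ 0 := by
    norm_cast; rintro rfl; linarith
  rw [hc']
  ext i j
  fin_cases i <;> fin_cases j <;>
    simp [wardFactor, Matrix.mul_apply, Fin.sum_univ_two, map_ofNat] <;> field_simp

/-- Yang's J-matrix of the explicit Ward-ansatz solution is Hermitian, positive definite,
and has determinant 1. -/
theorem stmt_12 (φ : ℝ) (g : ℂ) (c : ℝ) (hc : c = Real.cosh (2 * φ))
    (J : Matrix (Fin 2) (Fin 2) ℂ)
    (hJ : J = !![(2 * ((c : ℂ) ^ 2 + g * (starRingEnd ℂ) g)) / (c : ℂ), -g / (c : ℂ);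
                 -((starRingEnd ℂ) g) / (c : ℂ), 1 / (2 * (c : ℂ))]) :
    J.IsHermitian ∧ J.PosDef ∧ J.det = 1 := by
  have hc0 : 0 < c := hc ▸ zero_lt_one.trans_le (Real.one_le_cosh _)
  set s := Real.sqrt (2 * c)
  have hs : s ^ 2 = 2 * c := Real.sq_sqrt (by positivity)
  have hdet : (wardFactor s g).det = 1 := det_wardFactor (Real.sqrt_pos.2 (by positivity)).ne' g
  rw [hJ, ← conjTranspose_wardFactor_mul_self hs hc0 g]
  exact ⟨isHermitian_conjTranspose_mul_self _, posDef_conjTranspose_mul_self_of_det_eq_one hdet,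
    det_conjTranspose_mul_self_of_det_eq_one hdet⟩
end
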